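/- arXiv:2509.09642 — 3 statements merged into one kernel-verified Lean document; each statement's English description precedes it below -/
import Mathlib

section
/- For any natural numbers m and k, the binomial coefficient C(m+k, k) satisfies C(m+k, k) ≥ (1/(m+k+1)) · (1 + k/(m+1))^(m+1) · (1 + m/(k+1))^(k+1). -/
lemma bstep (s : ℕ) (hs : 1 ≤ s) :
    ((s:ℝ)+2)^(s+2) * (s:ℝ)^(s+1) ≤ ((s:ℝ)+1)^(2*s+3) := by
  have ha : (1:ℝ) ≤ (s:ℝ) := by exact_mod_cast hs
  set a : ℝ := (s:ℝ)
  have hpos : 0 < a := by linarith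
  have hpa : 0 < a*(a+2) := by positivity
  have hx : (0:ℝ) ≤ 1/(a*(a+2)) := by positivity
  have hb : (1 + ((s+1:ℕ):ℝ) * (1/(a*(a+2)))) ≤ (1 + 1/(a*(a+2)))^(s+1) :=
    one_add_mul_le_pow (by linarith) (s+1)
  have hcast : ((s+1:ℕ):ℝ) = a + 1 := by push_cast; ring
  rw [hcast] at hb
  have h2 : (a+2)/(a+1) ≤ 1 + (a+1) * (1/(a*(a+2))) := by
    rw [div_le_iff₀ (by linarith)]
    have e : (1 + (a+1)*(1/(a*(a+2))))*(a+1) = ((a*(a+2)) + (a+1))*(a+1)/(a*(a+2)) := by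
      field_simp
    rw [e, le_div_iff₀ hpa]
    nlinarith
  have h3 : (a+2)/(a+1) ≤ (1 + 1/(a*(a+2)))^(s+1) := le_trans h2 hb
  have h4 : (1 + 1/(a*(a+2))) = (a+1)^2 / (a*(a+2)) := by
    field_simp; ring
  rw [h4, div_pow] at h3
  rw [div_le_div_iff₀ (by linarith) (by positivity)] at h3
  calc (a+2)^(s+2) * a^(s+1) = (a+2) * ((a*(a+2))^(s+1)) := by
        rw [mul_pow]; ring
    _ ≤ ((a+1)^2)^(s+1) * (a+1) := h3
    _ = (a+1)^(2*s+3) := by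
        rw [← pow_mul, ← pow_succ, show 2*(s+1)+1 = 2*s+3 from by omega]

lemma g_antitone : Antitone (fun s : ℕ => (((s:ℝ)+2)/((s:ℝ)+1))^(s+2)) := by
  apply antitone_nat_of_succ_le
  intro s
  have h := bstep (s+1) (Nat.le_add_left 1 s)
  have ec : ((s+1:ℕ):ℝ) = (s:ℝ)+1 := by push_cast; ring
  rw [ec] at h
  show ((((s+1:ℕ):ℝ)+2)/(((s+1:ℕ):ℝ)+1))^(s+1+2) ≤ (((s:ℝ)+2)/((s:ℝ)+1))^(s+2)
  rw [ec, div_pow, div_pow, div_le_div_iff₀ (by positivity) (by positivity)]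
  have e2 : 2*(s+1)+3 = (s+1+2)+(s+2) := by omega
  rw [e2] at h
  calc ((s:ℝ)+1+2)^(s+1+2) * ((s:ℝ)+1)^(s+2)
      = ((s:ℝ)+1+2)^(s+1+2) * ((s:ℝ)+1)^(s+1+1) := rfl
    _ ≤ ((s:ℝ)+1+1)^((s+1+2)+(s+2)) := h
    _ = ((s:ℝ)+2)^(s+2) * ((s:ℝ)+1+1)^(s+1+2) := by
        rw [pow_add, show (s:ℝ)+1+1 = (s:ℝ)+2 from by ring]
        ring

lemma key (m k : ℕ) :
    ((m:ℝ)+k+1)^(m+k+1) ≤ ((m+k).choose k : ℝ) * ((m:ℝ)+1)^(m+1) * ((k:ℝ)+1)^(k+1) := by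
  induction k with
  | zero => simp
  | succ k ih =>
      have hg : ((((m+k:ℕ):ℝ)+2)/(((m+k:ℕ):ℝ)+1))^((m+k)+2)
          ≤ (((k:ℝ)+2)/((k:ℝ)+1))^(k+2) := g_antitone (Nat.le_add_left k m)
      push_cast at hg
      rw [div_pow, div_pow, div_le_div_iff₀ (by positivity) (by positivity)] at hg
      -- hg : (↑m+↑k+2)^(m+k+2) * (↑k+1)^(k+2) ≤ (↑k+2)^(k+2) * (↑m+↑k+1)^(m+k+2)
      have hch : (((m+k+1).choose (k+1) : ℕ):ℝ) * ((k:ℝ)+1)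
          = (((m+k).choose k : ℕ):ℝ) * ((m:ℝ)+k+1) := by
        have h := Nat.add_one_mul_choose_eq (m+k) k
        have : ((m+k+1) * ((m+k).choose k) : ℕ) = ((m+k+1).choose (k+1) * (k+1) : ℕ) := by
          simpa [Nat.succ_eq_add_one] using h
        have := congrArg (fun n : ℕ => (n:ℝ)) this
        push_cast at this
        linarith
      have ihm : ((m:ℝ)+k+1)^(m+k+2)
          ≤ (((m+k).choose k:ℕ):ℝ) * ((m:ℝ)+k+1) * ((m:ℝ)+1)^(m+1) * ((k:ℝ)+1)^(k+1) := by
        calc ((m:ℝ)+k+1)^(m+k+2) = ((m:ℝ)+k+1)^(m+k+1) * ((m:ℝ)+k+1) := by rw [← pow_succ]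
          _ ≤ ((((m+k).choose k:ℕ):ℝ) * ((m:ℝ)+1)^(m+1) * ((k:ℝ)+1)^(k+1)) * ((m:ℝ)+k+1) :=
              mul_le_mul_of_nonneg_right ih (by positivity)
          _ = _ := by ring
      show ((m:ℝ)+((k:ℕ)+1:ℕ)+1)^(m+(k+1)+1)
          ≤ ((m+(k+1)).choose (k+1) : ℝ) * ((m:ℝ)+1)^(m+1) * ((((k:ℕ)+1:ℕ):ℝ)+1)^(k+1+1)
      push_cast
      have hexp : m+(k+1)+1 = (m+k)+2 := by omega
      have harg : m+(k+1) = (m+k)+1 := by omega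
      rw [hexp, harg]
      have e4 : (m:ℝ)+(k+1)+1 = (m:ℝ)+k+2 := by ring
      have e5 : (k:ℝ)+1+1 = (k:ℝ)+2 := by ring
      rw [e4, e5]
      -- goal : (↑m+↑k+2)^(m+k+2) ≤ ↑((m+k+1).choose (k+1)) * (↑m+1)^(m+1) * (↑k+2)^(k+1+1)
      have hpos : (0:ℝ) < ((k:ℝ)+1)^(k+2) := by positivity
      refine le_of_mul_le_mul_right ?_ hpos
      calc ((m:ℝ)+k+2)^(m+k+2) * ((k:ℝ)+1)^(k+2)
          ≤ ((k:ℝ)+2)^(k+2) * ((m:ℝ)+k+1)^(m+k+2) := hg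
        _ ≤ ((k:ℝ)+2)^(k+2) * ((((m+k).choose k:ℕ):ℝ) * ((m:ℝ)+k+1) * ((m:ℝ)+1)^(m+1) * ((k:ℝ)+1)^(k+1)) :=
            mul_le_mul_of_nonneg_left ihm (by positivity)
        _ = ((k:ℝ)+2)^(k+2) * (((((m+k).choose k:ℕ):ℝ) * ((m:ℝ)+k+1)) * ((m:ℝ)+1)^(m+1) * ((k:ℝ)+1)^(k+1)) := by
            ring
        _ = ((k:ℝ)+2)^(k+2) * (((((m+k+1).choose (k+1):ℕ):ℝ) * ((k:ℝ)+1)) * ((m:ℝ)+1)^(m+1) * ((k:ℝ)+1)^(k+1)) := by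
            rw [hch]
        _ = ((((m+k+1).choose (k+1):ℕ):ℝ) * ((m:ℝ)+1)^(m+1) * ((k:ℝ)+2)^(k+1+1)) * ((k:ℝ)+1)^(k+2) := by
            ring

/-- For any natural numbers `m` and `k`,
`C(m+k, k) ≥ (1/(m+k+1)) · (1 + k/(m+1))^(m+1) · (1 + m/(k+1))^(k+1)`. -/
theorem binomial_lower_bound (m k : ℕ) :
    (1 / ((m : ℝ) + k + 1)) * (1 + (k : ℝ) / ((m : ℝ) + 1)) ^ (m + 1) *
        (1 + (m : ℝ) / ((k : ℝ) + 1)) ^ (k + 1) ≤ ((m + k).choose k : ℝ) := by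
  have h1 : (1 + (k:ℝ)/((m:ℝ)+1)) = ((m:ℝ)+k+1)/((m:ℝ)+1) := by
    field_simp; ring
  have h2 : (1 + (m:ℝ)/((k:ℝ)+1)) = ((m:ℝ)+k+1)/((k:ℝ)+1) := by
    field_simp; ring
  rw [h1, h2, div_pow, div_pow, div_mul_div_comm, div_mul_div_comm, one_mul,
    div_le_iff₀ (by positivity)]
  have epow : ((m:ℝ)+k+1)^(m+1) * ((m:ℝ)+k+1)^(k+1) = ((m:ℝ)+k+1)^(m+k+1) * ((m:ℝ)+k+1) := by
    have e : (m+1)+(k+1) = (m+k+1)+1 := by omega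
    rw [← pow_add, e, pow_succ]
  rw [epow]
  have hk := key m k
  calc ((m:ℝ)+k+1)^(m+k+1) * ((m:ℝ)+k+1)
      ≤ (((m+k).choose k : ℝ) * ((m:ℝ)+1)^(m+1) * ((k:ℝ)+1)^(k+1)) * ((m:ℝ)+k+1) :=
        mul_le_mul_of_nonneg_right hk (by positivity)
    _ = ((m+k).choose k : ℝ) * (((m:ℝ)+k+1) * ((m:ℝ)+1)^(m+1) * ((k:ℝ)+1)^(k+1)) := by ring
end

section
/- For positive integers n, d: (1 + (d²−1)/(n+1))^(n+1) ≥ (d²/(n+d²)) · (1 + d²/n)^n. -/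
/-!
Writing `y = n + x` with `x = d²`, both sides are explicit powers of `y`, and the inequality
reduces to `x (n + 1)^(n + 1) ≤ n^n y²`. This follows from `(1 + 1/n)^(n + 1) ≤ 4` together with
AM-GM in the form `4 n x ≤ (n + x)²`.
-/

/-- Via `(1 + 1/n)^n ≤ e`; the cases `n = 1, 2` are checked directly. -/
lemma one_add_inv_pow_succ_le_four {n : ℕ} (hn : 1 ≤ n) : (1 + (n : ℝ)⁻¹) ^ (n + 1) ≤ 4 := by
  rcases Nat.lt_or_ge n 3 with hn3 | hn3
  · interval_cases n <;> norm_num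
  have hinv : (n : ℝ)⁻¹ ≤ 1 / 3 := by
    rw [inv_le_comm₀ (by positivity) (by norm_num)]
    norm_num
    exact_mod_cast hn3
  have he : (1 + (n : ℝ)⁻¹) ^ n < 2.7182818286 :=
    Real.one_add_inv_pow_le_exp.trans_lt Real.exp_one_lt_d9
  rw [pow_succ]
  nlinarith [inv_nonneg.2 (n.cast_nonneg : (0 : ℝ) ≤ n)]

theorem div_add_mul_one_add_div_pow_le {x : ℝ} (hx : 0 ≤ x) {n : ℕ} (hn : 1 ≤ n) :
    x / (n + x) * (1 + x / n) ^ n ≤ (1 + (x - 1) / (n + 1)) ^ (n + 1) := by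
  have hn0 : (0 : ℝ) < n := by exact_mod_cast hn
  have hbase : 1 + (x - 1) / (n + 1) = (n + x) / (n + 1) := by field_simp; ring
  rw [hbase]
  calc x / (n + x) * (1 + x / n) ^ n
      = x * n * (1 + (n : ℝ)⁻¹) ^ (n + 1) / (n + x) ^ 2 * ((n + x) / (n + 1)) ^ (n + 1) := by
        rw [inv_eq_one_div, one_add_div hn0.ne', one_add_div hn0.ne', div_pow, div_pow, div_pow]
        field_simp
        ring
    _ ≤ 1 * ((n + x) / (n + 1)) ^ (n + 1) := by
        gcongr
        rw [div_le_one (by positivity)]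
        calc x * n * (1 + (n : ℝ)⁻¹) ^ (n + 1) ≤ 4 * x * n := by
              nlinarith [one_add_inv_pow_succ_le_four hn, mul_nonneg hx hn0.le]
          _ ≤ (n + x) ^ 2 := by nlinarith [four_mul_le_sq_add x (n : ℝ)]
    _ = ((n + x) / (n + 1)) ^ (n + 1) := one_mul _

theorem one_add_div_pow_succ_lower_bound_general (n d : ℕ) (hn : 1 ≤ n) :
    ((d : ℝ) ^ 2 / ((n : ℝ) + (d : ℝ) ^ 2)) * (1 + (d : ℝ) ^ 2 / (n : ℝ)) ^ n ≤
      (1 + ((d : ℝ) ^ 2 - 1) / ((n : ℝ) + 1)) ^ (n + 1) :=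
  div_add_mul_one_add_div_pow_le (sq_nonneg _) hn

/-- For positive integers `n, d`:
`(1 + (d²−1)/(n+1))^(n+1) ≥ (d²/(n+d²)) · (1 + d²/n)^n`. -/
theorem one_add_div_pow_succ_lower_bound (n d : ℕ) (hn : 1 ≤ n) (hd : 1 ≤ d) :
    ((d : ℝ) ^ 2 / ((n : ℝ) + (d : ℝ) ^ 2)) * (1 + (d : ℝ) ^ 2 / (n : ℝ)) ^ n ≤
      (1 + ((d : ℝ) ^ 2 - 1) / ((n : ℝ) + 1)) ^ (n + 1) :=
  one_add_div_pow_succ_lower_bound_general n d hn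
end

section
/- Let A and B be two quantum channels (completely positive trace-preserving maps) on a finite-dimensional Hilbert space H = H_S ⊗ H_0 satisfying the operator ordering (1−υ)A ⪯ B ⪯ (1+υ)A as completely positive maps, for some υ ∈ [0,1). Then for any positive semidefinite Hermitian X on H and any Y = Y_S ⊗ I_0 with Y_S positive semidefinite Hermitian, ‖Tr_{H_S}[(A−B)(X)·Y]‖₁ ≤ υ·‖Tr_{H_S}[A(X)·Y]‖₁. -/
open Matrix
open scoped Kronecker ComplexOrder

/-- Trace norm (Schatten 1-norm) of a complex matrix: `Tr √(AᴴA)`. -/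
noncomputable def traceNorm {n : Type*} [Fintype n] [DecidableEq n]
    (A : Matrix n n ℂ) : ℝ :=
  (((Matrix.posSemidef_conjTranspose_mul_self A).1.eigenvectorUnitary.1 *
      diagonal (((↑) : ℝ → ℂ) ∘ (Real.sqrt ·) ∘ (Matrix.posSemidef_conjTranspose_mul_self A).1.eigenvalues) *
      (star (Matrix.posSemidef_conjTranspose_mul_self A).1.eigenvectorUnitary :
        Matrix n n ℂ)).trace).re

/-- Von Neumann entropy (natural log) of a matrix, via eigenvalues when Hermitian. -/
noncomputable def vNEntropy {n : Type*} [Fintype n] [DecidableEq n]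
    (ρ : Matrix n n ℂ) : ℝ := by
  classical exact
    if h : ρ.IsHermitian then ∑ i, Real.negMulLog (h.eigenvalues i) else 0

/-- The partial trace over the first tensor factor. -/
noncomputable def ptraceS {s o : Type*} [Fintype s]
    (M : Matrix (s × o) (s × o) ℂ) : Matrix o o ℂ :=
  Matrix.of fun i j => ∑ a : s, M (a, i) (a, j)

/-- The unitary conjugation channel `ρ ↦ U ρ Uᴴ` as a linear endomorphism. -/
noncomputable def uch {n : Type*} [Fintype n] [DecidableEq n]
    (U : Matrix n n ℂ) : Matrix n n ℂ →ₗ[ℂ] Matrix n n ℂ where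
  toFun := fun ρ => U * ρ * Uᴴ
  map_add' := fun ρ σ => by simp [Matrix.add_mul, Matrix.mul_add]
  map_smul' := fun c ρ => by simp [Matrix.mul_smul, Matrix.smul_mul]

/-- Extension `Φ ⊗ id` of a map on matrices to a bipartite system (function form). -/
noncomputable def tensorExt {n r : Type*}
    (Φ : Matrix n n ℂ →ₗ[ℂ] Matrix n n ℂ)
    (M : Matrix (n × r) (n × r) ℂ) : Matrix (n × r) (n × r) ℂ :=
  Matrix.of fun p q => Φ (Matrix.of fun a b => M (a, p.2) (b, q.2)) p.1 q.1

/-- Diamond norm: supremum of trace norm of `(Φ ⊗ id)` over bipartite states,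
with reference system of the same dimension. -/
noncomputable def diamondNorm {n : Type*} [Fintype n] [DecidableEq n]
    (Φ : Matrix n n ℂ →ₗ[ℂ] Matrix n n ℂ) : ℝ :=
  ⨆ M : {M : Matrix (n × n) (n × n) ℂ // M.PosSemidef ∧ M.trace = 1},
    traceNorm (tensorExt Φ M.1)

/-- Trace-preserving map on matrices. -/
def IsTracePreserving {n : Type*} [Fintype n]
    (Φ : Matrix n n ℂ →ₗ[ℂ] Matrix n n ℂ) : Prop :=
  ∀ X, (Φ X).trace = X.trace

/-- Complete positivity (via the extension to an equal-size reference system). -/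
def IsCompletelyPositive {n : Type*} [Fintype n] [DecidableEq n]
    (Φ : Matrix n n ℂ →ₗ[ℂ] Matrix n n ℂ) : Prop :=
  ∀ M : Matrix (n × n) (n × n) ℂ, M.PosSemidef → (tensorExt Φ M).PosSemidef

/-- Operator (spectral) norm of a complex matrix. -/
noncomputable def opNorm {n : Type*} [Fintype n] [DecidableEq n]
    (A : Matrix n n ℂ) : ℝ :=
  ‖Matrix.toEuclideanCLM (𝕜 := ℂ) A‖

/-!
Write `Y_S = Bᴴ B`. Cycling `B ⊗ I` under the partial trace turns `M ↦ Tr_S[M (Y_S ⊗ I)]` into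
`M ↦ Tr_S[(B ⊗ I) M (B ⊗ I)ᴴ]`, a positive map, so with `P = Tr_S[A(X) Y]` and
`G = Tr_S[(A - B)(X) Y]` the ordering of the channels gives `-υ P ⪯ G ⪯ υ P`.
Evaluating both inequalities on the eigenvectors `vᵢ` of the Hermitian `G` bounds each
`|λᵢ|` by `υ ⟨vᵢ, P vᵢ⟩`; summing gives `‖G‖₁ ≤ υ Tr P = υ ‖P‖₁`.
-/

open scoped MatrixOrder

section traceNorm

variable {n : Type*} [Fintype n] [DecidableEq n]

theorem traceNorm_eq_re_trace_abs (A : Matrix n n ℂ) : traceNorm A = (CFC.abs A).trace.re := by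
  have hA := posSemidef_conjTranspose_mul_self A
  rw [CFC.abs, star_eq_conjTranspose, traceNorm, CFC.sqrt_eq_cfc, cfc_nnreal_eq_real _ _ hA.nonneg,
    hA.1.cfc_eq, IsHermitian.cfc, Unitary.conjStarAlgAut_apply]
  congr! 5
  ext i
  simp [max_eq_left (hA.eigenvalues_nonneg i)]

theorem traceNorm_of_posSemidef {P : Matrix n n ℂ} (hP : P.PosSemidef) :
    traceNorm P = P.trace.re := by
  rw [traceNorm_eq_re_trace_abs, CFC.abs_of_nonneg P hP.nonneg]

theorem Matrix.IsHermitian.traceNorm_eq_sum_abs_eigenvalues {G : Matrix n n ℂ}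
    (hG : G.IsHermitian) : traceNorm G = ∑ i, |hG.eigenvalues i| := by
  rw [traceNorm_eq_re_trace_abs, CFC.abs_eq_cfc_norm G hG.isSelfAdjoint, hG.cfc_eq,
    IsHermitian.cfc, Unitary.conjStarAlgAut_apply, trace_mul_cycle, Unitary.coe_star_mul_self,
    one_mul, trace_diagonal, Complex.re_sum]
  simp

theorem traceNorm_le_re_trace_of_posSemidef_sub_of_posSemidef_add {G P : Matrix n n ℂ}
    (h₁ : (P - G).PosSemidef) (h₂ : (P + G).PosSemidef) : traceNorm G ≤ P.trace.re := by
  have hG : G.IsHermitian := by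
    have e₁ := h₁.1
    have e₂ := h₂.1
    rw [IsHermitian, conjTranspose_sub] at e₁
    rw [IsHermitian, conjTranspose_add] at e₂
    show Gᴴ = G
    linear_combination (norm := module) (2⁻¹ : ℂ) • (e₂ - e₁)
  set U := hG.eigenvectorUnitary
  have hD : (star U : Matrix n n ℂ) * G * U = diagonal (Complex.ofReal ∘ hG.eigenvalues) := by
    simpa using hG.conjStarAlgAut_star_eigenvectorUnitary
  have h_eig (i : n) : |hG.eigenvalues i| ≤ (((star U : Matrix n n ℂ) * P * U) i i).re := by
    have d₁ := (h₁.conjTranspose_mul_mul_same (U : Matrix n n ℂ)).diag_nonneg (i := i)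
    have d₂ := (h₂.conjTranspose_mul_mul_same (U : Matrix n n ℂ)).diag_nonneg (i := i)
    rw [← star_eq_conjTranspose, Matrix.mul_sub, Matrix.sub_mul, hD] at d₁
    rw [← star_eq_conjTranspose, Matrix.mul_add, Matrix.add_mul, hD] at d₂
    simp only [Matrix.sub_apply, Matrix.add_apply, diagonal_apply_eq, Function.comp_apply,
      Complex.nonneg_iff, Complex.sub_re, Complex.add_re, Complex.ofReal_re] at d₁ d₂
    exact abs_le.mpr ⟨by linarith [d₂.1], by linarith [d₁.1]⟩
  calc traceNorm G = ∑ i, |hG.eigenvalues i| := hG.traceNorm_eq_sum_abs_eigenvalues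
    _ ≤ ∑ i, (((star U : Matrix n n ℂ) * P * U) i i).re := Finset.sum_le_sum fun i _ => h_eig i
    _ = ((star U : Matrix n n ℂ) * P * U).trace.re := by rw [trace, Complex.re_sum]; rfl
    _ = P.trace.re := by rw [trace_mul_cycle, Unitary.mul_star_self_of_mem U.2, one_mul]

end traceNorm

theorem tensorExt_kronecker {n r : Type*} (Φ : Matrix n n ℂ →ₗ[ℂ] Matrix n n ℂ)
    (X : Matrix n n ℂ) (E : Matrix r r ℂ) : tensorExt Φ (X ⊗ₖ E) = Φ X ⊗ₖ E := by
  ext ⟨a, p⟩ ⟨b, q⟩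
  have hslice : (Matrix.of fun a b => (X ⊗ₖ E) (a, p) (b, q)) = E p q • X := by
    ext; simp [mul_comm]
  rw [tensorExt, of_apply, hslice, map_smul]
  simp [mul_comm]

section completelyPositive

variable {n : Type*} [Fintype n] [DecidableEq n]

theorem IsCompletelyPositive.posSemidef_apply {Φ : Matrix n n ℂ →ₗ[ℂ] Matrix n n ℂ}
    (hΦ : IsCompletelyPositive Φ) {X : Matrix n n ℂ} (hX : X.PosSemidef) :
    (Φ X).PosSemidef := by
  cases isEmpty_or_nonempty n with
  | inl _ => exact Subsingleton.elim (0 : Matrix n n ℂ) (Φ X) ▸ PosSemidef.zero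
  | inr hn =>
    obtain ⟨i₀⟩ := hn
    have h := (hΦ _ (hX.kronecker PosSemidef.one)).submatrix fun a => (a, i₀)
    rw [tensorExt_kronecker] at h
    convert h using 1
    ext
    simp

end completelyPositive

section ptraceS

variable {s o : Type*} [Fintype s]

theorem ptraceS_eq_sum_submatrix (M : Matrix (s × o) (s × o) ℂ) :
    ptraceS M = ∑ a, M.submatrix (fun i => (a, i)) (fun i => (a, i)) := by
  ext
  simp [ptraceS, Matrix.sum_apply]

theorem ptraceS_sub (M N : Matrix (s × o) (s × o) ℂ) :
    ptraceS (M - N) = ptraceS M - ptraceS N := by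
  ext
  simp [ptraceS, Finset.sum_sub_distrib]

theorem ptraceS_smul (c : ℂ) (M : Matrix (s × o) (s × o) ℂ) :
    ptraceS (c • M) = c • ptraceS M := by
  ext
  simp [ptraceS, Finset.mul_sum]

theorem Matrix.PosSemidef.ptraceS {M : Matrix (s × o) (s × o) ℂ} (hM : M.PosSemidef) :
    (ptraceS M).PosSemidef := by
  rw [ptraceS_eq_sum_submatrix]
  exact posSemidef_sum _ fun a _ => hM.submatrix _

variable [Fintype o] [DecidableEq o]

theorem ptraceS_kronecker_one_mul (D : Matrix s s ℂ) (N : Matrix (s × o) (s × o) ℂ) :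
    ptraceS ((D ⊗ₖ (1 : Matrix o o ℂ)) * N) = ptraceS (N * (D ⊗ₖ (1 : Matrix o o ℂ))) := by
  ext i j
  simp only [ptraceS, of_apply, mul_apply, Fintype.sum_prod_type, kroneckerMap_apply, one_apply,
    mul_ite, ite_mul, mul_one, mul_zero, zero_mul, Finset.sum_ite_eq, Finset.sum_ite_eq',
    Finset.mem_univ, if_true]
  rw [Finset.sum_comm]
  simp [mul_comm]

theorem posSemidef_ptraceS_mul_kronecker_one {M : Matrix (s × o) (s × o) ℂ}
    (hM : M.PosSemidef) {Y : Matrix s s ℂ} (hY : Y.PosSemidef) :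
    (ptraceS (M * (Y ⊗ₖ (1 : Matrix o o ℂ)))).PosSemidef := by
  classical
  obtain ⟨B, rfl⟩ := CStarAlgebra.nonneg_iff_eq_star_mul_self.mp hY.nonneg
  have hB : (star B * B) ⊗ₖ (1 : Matrix o o ℂ) = (B ⊗ₖ (1 : Matrix o o ℂ))ᴴ * (B ⊗ₖ 1) := by
    rw [conjTranspose_kronecker, conjTranspose_one, ← mul_kronecker_mul, one_mul,
      star_eq_conjTranspose]
  rw [hB, ← Matrix.mul_assoc, ← ptraceS_kronecker_one_mul, ← Matrix.mul_assoc]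
  exact (hM.mul_mul_conjTranspose_same _).ptraceS

end ptraceS

theorem trace_norm_relative_order_bound_general {s o : Type*}
    [Fintype s] [DecidableEq s] [Fintype o] [DecidableEq o]
    (A B : Matrix (s × o) (s × o) ℂ →ₗ[ℂ] Matrix (s × o) (s × o) ℂ)
    (hAcp : IsCompletelyPositive A)
    (υ : ℝ)
    (hlow : IsCompletelyPositive (B - (((1 : ℝ) - υ : ℝ) : ℂ) • A))
    (hhigh : IsCompletelyPositive ((((1 : ℝ) + υ : ℝ) : ℂ) • A - B))
    (X : Matrix (s × o) (s × o) ℂ) (hX : X.PosSemidef)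
    (YS : Matrix s s ℂ) (hYS : YS.PosSemidef) :
    traceNorm (ptraceS ((A X - B X) * (YS ⊗ₖ (1 : Matrix o o ℂ)))) ≤
      υ * traceNorm (ptraceS (A X * (YS ⊗ₖ (1 : Matrix o o ℂ)))) := by
  set Y := YS ⊗ₖ (1 : Matrix o o ℂ)
  set P := ptraceS (A X * Y)
  set G := ptraceS ((A X - B X) * Y)
  have h_pos {Φ} (hΦ : IsCompletelyPositive Φ) : (ptraceS (Φ X * Y)).PosSemidef :=
    posSemidef_ptraceS_mul_kronecker_one (hΦ.posSemidef_apply hX) hYS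
  have hP : P.PosSemidef := h_pos hAcp
  have h_upper : ((υ : ℂ) • P - G).PosSemidef := by
    convert h_pos hlow using 2
    simp only [P, G, LinearMap.sub_apply, LinearMap.smul_apply, Matrix.sub_mul, Matrix.smul_mul,
      ptraceS_sub, ptraceS_smul]
    push_cast
    module
  have h_lower : ((υ : ℂ) • P + G).PosSemidef := by
    convert h_pos hhigh using 2
    simp only [P, G, LinearMap.sub_apply, LinearMap.smul_apply, Matrix.sub_mul, Matrix.smul_mul,
      ptraceS_sub, ptraceS_smul]
    push_cast
    module
  calc traceNorm G ≤ ((υ : ℂ) • P).trace.re :=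
        traceNorm_le_re_trace_of_posSemidef_sub_of_posSemidef_add h_upper h_lower
    _ = υ * traceNorm P := by simp [traceNorm_of_posSemidef hP]

/-- Lemma on relatively-ordered channels: if channels `A, B` satisfy
`(1−υ)A ⪯ B ⪯ (1+υ)A` (as CP maps), then for PSD `X` and `Y = Y_S ⊗ I`,
`‖Tr_S[(A−B)(X)·Y]‖₁ ≤ υ·‖Tr_S[A(X)·Y]‖₁`. -/
theorem trace_norm_relative_order_bound {s o : Type*}
    [Fintype s] [DecidableEq s] [Fintype o] [DecidableEq o]
    (A B : Matrix (s × o) (s × o) ℂ →ₗ[ℂ] Matrix (s × o) (s × o) ℂ)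
    (hAcp : IsCompletelyPositive A) (hAtp : IsTracePreserving A)
    (hBcp : IsCompletelyPositive B) (hBtp : IsTracePreserving B)
    (υ : ℝ) (hυ0 : 0 ≤ υ) (hυ1 : υ < 1)
    (hlow : IsCompletelyPositive (B - (((1 : ℝ) - υ : ℝ) : ℂ) • A))
    (hhigh : IsCompletelyPositive ((((1 : ℝ) + υ : ℝ) : ℂ) • A - B))
    (X : Matrix (s × o) (s × o) ℂ) (hX : X.PosSemidef)
    (YS : Matrix s s ℂ) (hYS : YS.PosSemidef) :
    traceNorm (ptraceS ((A X - B X) * (YS ⊗ₖ (1 : Matrix o o ℂ)))) ≤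
      υ * traceNorm (ptraceS (A X * (YS ⊗ₖ (1 : Matrix o o ℂ)))) :=
  trace_norm_relative_order_bound_general A B hAcp υ hlow hhigh X hX YS hYS
end
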